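/- arXiv:1903.02261 — 5 statements merged into one kernel-verified Lean document; each statement's English description precedes it below -/
import Mathlib

section
/- Simple stratified sampling is pairwise negatively dependent: if π is a uniformly random permutation of {1,...,N}, R_1,...,R_N are i.i.d. uniform on (0,1] independent of π, and p_j = (π(j) - R_j)/N, then for all q, r ∈ [0,1), P(p_1 ≥ q and p_2 ≥ r) ≤ (1-q)(1-r). -/
/-!
Conditionally on the permutation `σ`, the event `{q ≤ p₀, r ≤ p₁}` has probability
`F (σ 0 + 1 - q N) * F (σ 1 + 1 - r N)`, where `F = unitCdf` is the distribution function of the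
uniform law on `(0, 1]`. Averaging over `σ` turns this into `(A B - S) / (N (N - 1))` with
`A = ∑ aᵢ`, `B = ∑ bᵢ`, `S = ∑ aᵢ bᵢ` for the monotone sequences `aᵢ = F (i + 1 - q N)`,
`bᵢ = F (i + 1 - r N)`. Chebyshev's sum inequality `A B ≤ N S` bounds it by `(A / N) (B / N)`, and
`A = N (1 - q)`, `B = N (1 - r)` because the sums telescope.
-/

open MeasureTheory ProbabilityTheory

noncomputable instance (n : ℕ) : MeasurableSpace (Equiv.Perm (Fin n)) := ⊤

/-- The uniform probability measure on a finite type. -/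
noncomputable def unif (α : Type*) [Fintype α] [MeasurableSpace α] : Measure α :=
  (Fintype.card α : ENNReal)⁻¹ • Measure.count

open Finset Equiv Set
open scoped Nat ENNReal

def unitCdf (x : ℝ) : ℝ := max 0 (min 1 x)

lemma unitCdf_nonneg (x : ℝ) : 0 ≤ unitCdf x := le_max_left _ _

lemma monotone_unitCdf : Monotone unitCdf := fun _ _ h => max_le_max le_rfl (min_le_min le_rfl h)

lemma unitCdf_eq_max_sub_max (x : ℝ) : unitCdf x = max 0 x - max 0 (x - 1) := by
  unfold unitCdf
  grind

lemma monotone_unitCdf_natCast_add_one_sub (n : ℕ) (t : ℝ) :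
    Monotone fun i : Fin n => unitCdf ((i : ℕ) + 1 - t) :=
  fun _ _ hij => monotone_unitCdf (by gcongr; exact hij)

lemma sum_unitCdf_natCast_add_one_sub (n : ℕ) {t : ℝ} (ht₀ : 0 ≤ t) (htn : t ≤ n) :
    ∑ i : Fin n, unitCdf ((i : ℕ) + 1 - t) = n - t := by
  have telescope := Finset.sum_range_sub (fun i : ℕ => max 0 ((i : ℝ) - t)) n
  push_cast at telescope
  rw [Fin.sum_univ_eq_sum_range (fun i : ℕ => unitCdf (i + 1 - t)), max_eq_right (by linarith),
    zero_sub, max_eq_left (by linarith), sub_zero] at *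
  rw [← telescope]
  exact sum_congr rfl fun i _ => by rw [unitCdf_eq_max_sub_max]; ring_nf

lemma volume_restrict_Ioc_zero_one_Iic (c : ℝ) :
    volume.restrict (Ioc (0 : ℝ) 1) (Iic c) = ENNReal.ofReal (unitCdf c) := by
  rw [Measure.restrict_apply measurableSet_Iic, inter_comm, Ioc_inter_Iic, Real.volume_Ioc,
    unitCdf, ENNReal.ofReal_max, ENNReal.ofReal_zero, sub_zero]
  simp

lemma sum_perm_apply_zero {R : Type*} [AddCommMonoid R] (n : ℕ) (f : Fin (n + 1) → R) :
    ∑ σ : Perm (Fin (n + 1)), f (σ 0) = n ! • ∑ i, f i := by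
  rw [← Perm.decomposeFin.symm.sum_comp, Fintype.sum_prod_type]
  simp only [Perm.decomposeFin_symm_apply_zero, sum_const, card_univ, Fintype.card_perm,
    Fintype.card_fin, smul_sum]

lemma sum_perm_apply_zero_mul_apply_one {R : Type*} [CommRing R] (n : ℕ) (a b : Fin (n + 2) → R) :
    ∑ σ : Perm (Fin (n + 2)), a (σ 0) * b (σ 1)
      = n ! * ((∑ i, a i) * (∑ i, b i) - ∑ i, a i * b i) := by
  have sum_perm_swap (k : Fin (n + 2)) :
      ∑ e : Perm (Fin (n + 1)), b (swap 0 k (e 0).succ) = n ! * (∑ i, b i - b k) := by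
    rw [sum_perm_apply_zero n (fun i => b (swap 0 k i.succ)), nsmul_eq_mul,
      ← Equiv.sum_comp (swap 0 k) b, Fin.sum_univ_succ (f := fun i => b (swap 0 k i)),
      swap_apply_left, add_sub_cancel_left]
  rw [← Perm.decomposeFin.symm.sum_comp, Fintype.sum_prod_type]
  simp only [Perm.decomposeFin_symm_apply_zero, Perm.decomposeFin_symm_apply_one, ← mul_sum,
    sum_perm_swap]
  rw [sum_mul, ← sum_sub_distrib, mul_sum]
  exact sum_congr rfl fun _ _ => by ring

lemma Monovary.sum_perm_apply_zero_mul_apply_one_le {K : Type*} [Field K] [LinearOrder K]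
    [IsStrictOrderedRing K] {n : ℕ} {a b : Fin (n + 2) → K} (hab : Monovary a b) :
    ∑ σ : Perm (Fin (n + 2)), a (σ 0) * b (σ 1)
      ≤ (n + 2)! * ((∑ i, a i) / (n + 2) * ((∑ i, b i) / (n + 2))) := by
  have chebyshev := hab.sum_mul_sum_le_card_mul_sum
  rw [Fintype.card_fin, Nat.cast_add, Nat.cast_two, ← div_le_iff₀' (by positivity)] at chebyshev
  calc ∑ σ : Perm (Fin (n + 2)), a (σ 0) * b (σ 1)
      = n ! * ((∑ i, a i) * (∑ i, b i) - ∑ i, a i * b i) := sum_perm_apply_zero_mul_apply_one n a b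
    _ ≤ n ! * ((∑ i, a i) * (∑ i, b i) - (∑ i, a i) * (∑ i, b i) / (n + 2)) := by gcongr
    _ = (n + 2)! * ((∑ i, a i) / (n + 2) * ((∑ i, b i) / (n + 2))) := by
      rw [Nat.factorial_succ, Nat.factorial_succ]
      push_cast
      field_simp
      ring

lemma MeasureTheory.Measure.pi_setOf_apply_mem_and_apply_mem {ι : Type*} [Fintype ι]
    {α : ι → Type*} [∀ i, MeasurableSpace (α i)] (μ : ∀ i, Measure (α i))
    [∀ i, IsProbabilityMeasure (μ i)]
    {i j : ι} (hij : i ≠ j) {s : Set (α i)} {t : Set (α j)} (hs : MeasurableSet s)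
    (ht : MeasurableSet t) :
    Measure.pi μ {x | x i ∈ s ∧ x j ∈ t} = μ i s * μ j t := by
  have hindep := (iIndepFun_pi (μ := μ) (X := fun _ => id) fun _ => aemeasurable_id).indepFun hij
  rw [← (measurePreserving_eval μ i).measure_preimage hs.nullMeasurableSet,
    ← (measurePreserving_eval μ j).measure_preimage ht.nullMeasurableSet]
  exact hindep.measure_inter_preimage_eq_mul s t hs ht

lemma lintegral_unif {α : Type*} [Fintype α] [MeasurableSpace α] [MeasurableSingletonClass α]
    (f : α → ℝ≥0∞) : ∫⁻ x, f x ∂(unif α) = (Fintype.card α : ℝ≥0∞)⁻¹ * ∑ x, f x := by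
  rw [unif, lintegral_smul_measure, lintegral_count, tsum_fintype, smul_eq_mul]

lemma unif_prod_uniform_setOf_apply_zero_le_and_apply_one_le (n : ℕ) (c d : Fin (n + 2) → ℝ) :
    ((unif (Perm (Fin (n + 2)))).prod
      (Measure.pi fun _ : Fin (n + 2) => volume.restrict (Ioc (0 : ℝ) 1)))
      {ω | ω.2 0 ≤ c (ω.1 0) ∧ ω.2 1 ≤ d (ω.1 1)}
    = ENNReal.ofReal
        ((∑ σ : Perm (Fin (n + 2)), unitCdf (c (σ 0)) * unitCdf (d (σ 1))) / (n + 2)!) := by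
  have : MeasurableSingletonClass (Perm (Fin (n + 2))) := ⟨fun _ => trivial⟩
  have : IsProbabilityMeasure (volume.restrict (Ioc (0 : ℝ) 1)) := ⟨by simp⟩
  have hmeas : MeasurableSet {ω : Perm (Fin (n + 2)) × (Fin (n + 2) → ℝ) |
      ω.2 0 ≤ c (ω.1 0) ∧ ω.2 1 ≤ d (ω.1 1)} :=
    (measurableSet_le (by fun_prop)
      (measurable_from_top (f := fun σ : Perm _ => c (σ 0)).comp measurable_fst)).inter
    (measurableSet_le (by fun_prop)
      (measurable_from_top (f := fun σ : Perm _ => d (σ 1)).comp measurable_fst))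
  have hslice (σ : Perm (Fin (n + 2))) :
      Measure.pi (fun _ : Fin (n + 2) => volume.restrict (Ioc (0 : ℝ) 1))
        (Prod.mk σ ⁻¹' {ω | ω.2 0 ≤ c (ω.1 0) ∧ ω.2 1 ≤ d (ω.1 1)})
      = ENNReal.ofReal (unitCdf (c (σ 0)) * unitCdf (d (σ 1))) := by
    rw [ENNReal.ofReal_mul (unitCdf_nonneg _), ← volume_restrict_Ioc_zero_one_Iic,
      ← volume_restrict_Ioc_zero_one_Iic]
    exact Measure.pi_setOf_apply_mem_and_apply_mem (fun _ => volume.restrict (Ioc (0 : ℝ) 1))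
      (zero_ne_one' (Fin (n + 2))) (measurableSet_Iic (a := c (σ 0)))
      (measurableSet_Iic (a := d (σ 1)))
  rw [Measure.prod_apply hmeas, lintegral_unif]
  simp only [hslice, Fintype.card_perm, Fintype.card_fin]
  rw [← ENNReal.ofReal_sum_of_nonneg fun σ _ => mul_nonneg (unitCdf_nonneg _) (unitCdf_nonneg _),
    div_eq_inv_mul, ENNReal.ofReal_mul (by positivity), ENNReal.ofReal_inv_of_pos (by positivity),
    ENNReal.ofReal_natCast]

/-- Simple stratified sampling is pairwise negatively dependent:
if `π` is a uniformly random permutation of `{1,…,N}`, `R_1,…,R_N` are i.i.d. uniform on `(0,1]`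
independent of `π`, and `p_j = (π(j) - R_j)/N`, then for all `q, r ∈ [0,1)`,
`P(p_1 ≥ q and p_2 ≥ r) ≤ (1-q)(1-r)`. -/
theorem stratified_sampling_pairwise_negatively_dependent
    (N : ℕ) (hN : 2 ≤ N)
    (μ : Measure (Equiv.Perm (Fin N) × (Fin N → ℝ)))
    (hμ : μ = (unif (Equiv.Perm (Fin N))).prod
      (Measure.pi fun _ : Fin N => volume.restrict (Set.Ioc (0 : ℝ) 1)))
    (p : Fin N → (Equiv.Perm (Fin N) × (Fin N → ℝ)) → ℝ)
    (hp : ∀ j ω, p j ω = (((ω.1 j : ℕ) + 1 : ℝ) - ω.2 j) / N)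
    (q r : ℝ) (hq : q ∈ Set.Ico (0 : ℝ) 1) (hr : r ∈ Set.Ico (0 : ℝ) 1) :
    μ {ω | q ≤ p ⟨0, by omega⟩ ω ∧ r ≤ p ⟨1, by omega⟩ ω}
      ≤ ENNReal.ofReal ((1 - q) * (1 - r)) := by
  obtain ⟨n, rfl⟩ : ∃ n, N = n + 2 := ⟨N - 2, by omega⟩
  have hpos : (0 : ℝ) < n + 2 := by positivity
  have hevent : {ω | q ≤ p ⟨0, by omega⟩ ω ∧ r ≤ p ⟨1, by omega⟩ ω}
      = {ω : Perm (Fin (n + 2)) × (Fin (n + 2) → ℝ) |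
          ω.2 0 ≤ (ω.1 0 : ℕ) + 1 - q * (n + 2) ∧ ω.2 1 ≤ (ω.1 1 : ℕ) + 1 - r * (n + 2)} := by
    ext ω
    simp only [mem_ofPred_eq, hp, Fin.zero_eta, Fin.mk_one, Nat.cast_add, Nat.cast_ofNat,
      le_div_iff₀ hpos]
    constructor <;> rintro ⟨h₀, h₁⟩ <;> constructor <;> linarith
  rw [hμ, hevent]
  refine (unif_prod_uniform_setOf_apply_zero_le_and_apply_one_le n
    (fun i => (i : ℕ) + 1 - q * (n + 2)) (fun i => (i : ℕ) + 1 - r * (n + 2))).trans_le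
    (ENNReal.ofReal_le_ofReal ((div_le_iff₀' (by positivity)).2 ?_))
  calc _ ≤ _ := ((monotone_unitCdf_natCast_add_one_sub _ _).monovary
          (monotone_unitCdf_natCast_add_one_sub _ _)).sum_perm_apply_zero_mul_apply_one_le
    _ = (n + 2)! * ((1 - q) * (1 - r)) := by
      rw [sum_unitCdf_natCast_add_one_sub _ (by nlinarith [hq.1]) (by push_cast; nlinarith [hq.2]),
        sum_unitCdf_natCast_add_one_sub _ (by nlinarith [hr.1]) (by push_cast; nlinarith [hr.2])]
      field_simp
      push_cast
      ring
end

section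
/- Let N be prime and d ≥ 1. In the discrete model of the randomly shifted rank-1 lattice, the d coordinate pairs (p_1^{(i)}, p_2^{(i)}), i = 1,...,d, are independent and identically distributed, each uniform on ordered pairs of distinct elements of (1/N)·{0,...,N-1}. -/
open MeasureTheory ProbabilityTheory

noncomputable instance (N : ℕ) : MeasurableSpace (ZMod N) := ⊤
instance (N : ℕ) : MeasurableSingletonClass (ZMod N) := ⟨fun _ => trivial⟩

/-- Sample space of the discrete model of the randomly shifted rank-1 lattice. -/
def DiscModel (N d : ℕ) : Type :=
  (Fin d → {x : ZMod N // x ≠ 0}) × (Fin d → ZMod N) × {m : ZMod N × ZMod N // m.1 ≠ m.2}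

noncomputable instance (N d : ℕ) : MeasurableSpace (DiscModel N d) :=
  inferInstanceAs (MeasurableSpace ((Fin d → {x : ZMod N // x ≠ 0}) × (Fin d → ZMod N) ×
    {m : ZMod N × ZMod N // m.1 ≠ m.2}))

/-- The two lattice points of the discrete model: `p_j^{(i)} = g^{(i)} m_j + S^{(i)}`. -/
def discPoint (N d : ℕ) (j : Fin 2) (i : Fin d) (ω : DiscModel N d) : ZMod N :=
  (ω.1 i : ZMod N) * (if j = 0 then ω.2.2.1.1 else ω.2.2.1.2) + ω.2.1 i

namespace DiscAux

instance (N d : ℕ) [NeZero N] : Fintype (DiscModel N d) :=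
  inferInstanceAs (Fintype ((Fin d → {x : ZMod N // x ≠ 0}) × (Fin d → ZMod N) ×
    {m : ZMod N × ZMod N // m.1 ≠ m.2}))

instance (N d : ℕ) [NeZero N] : Countable (DiscModel N d) := Finite.to_countable

instance (N d : ℕ) : MeasurableSingletonClass (DiscModel N d) :=
  inferInstanceAs (MeasurableSingletonClass ((Fin d → {x : ZMod N // x ≠ 0}) × (Fin d → ZMod N) ×
    {m : ZMod N × ZMod N // m.1 ≠ m.2}))

theorem count_eq_natCard {α} [MeasurableSpace α] [MeasurableSingletonClass α] [Finite α]
    (s : Set α) : Measure.count s = Nat.card s := by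
  rw [Measure.count_apply_finite s s.toFinite]
  simp [Nat.card_eq_card_finite_toFinset s.toFinite]

section unifbasic

variable {α β γ : Type*} [MeasurableSpace α] [MeasurableSpace β] [MeasurableSpace γ]
  [MeasurableSingletonClass α] [MeasurableSingletonClass β] [MeasurableSingletonClass γ]
  [Fintype α] [Fintype β] [Fintype γ]

instance unif_fin : IsFiniteMeasure (unif α) := by
  constructor
  rw [unif, Measure.smul_apply, smul_eq_mul, count_eq_natCard, Nat.card_univ,
    Nat.card_eq_fintype_card]
  rcases eq_or_ne (Fintype.card α) 0 with h | h
  · simp [h]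
  · exact ENNReal.mul_lt_top (ENNReal.inv_lt_top.mpr (by simpa using Nat.pos_of_ne_zero h))
      (ENNReal.natCast_lt_top _)

theorem unif_singleton (a : α) : unif α {a} = (Fintype.card α : ENNReal)⁻¹ := by
  rw [unif, Measure.smul_apply, smul_eq_mul, Measure.count_singleton, mul_one]

theorem prod3_eq :
    (unif α).prod ((unif β).prod (unif γ)) =
      ((Fintype.card α : ENNReal)⁻¹ * (Fintype.card β : ENNReal)⁻¹
        * (Fintype.card γ : ENNReal)⁻¹) • Measure.count := by
  apply Measure.ext_of_singleton
  rintro ⟨a, b, c⟩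
  have h1 : ({(a, b, c)} : Set (α × β × γ)) = {a} ×ˢ ({b} ×ˢ {c}) := by
    rw [Set.singleton_prod_singleton, Set.singleton_prod_singleton]
  rw [h1, Measure.prod_prod, Measure.prod_prod, unif_singleton, unif_singleton, unif_singleton,
    Measure.smul_apply, smul_eq_mul, ← h1, Measure.count_singleton, mul_one, mul_assoc]

end unifbasic

theorem cardne (N : ℕ) [NeZero N] : Fintype.card {x : ZMod N // x ≠ 0} = N - 1 := by
  rw [Fintype.card_subtype_compl, Fintype.card_subtype_eq (0 : ZMod N), ZMod.card]

theorem cardM (N : ℕ) [NeZero N] : Fintype.card {m : ZMod N × ZMod N // m.1 ≠ m.2} = N*N - N := by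
  have h2 : Fintype.card {m : ZMod N × ZMod N // m.1 = m.2} = Fintype.card (ZMod N) :=
    Fintype.card_congr ⟨fun x => x.1.1, fun a => ⟨(a,a), rfl⟩, fun x => Subtype.ext (by
      obtain ⟨⟨a,b⟩, h⟩ := x; simpa using h), fun a => rfl⟩
  rw [Fintype.card_subtype_compl, h2, Fintype.card_prod, ZMod.card]

theorem castM (N : ℕ) : ((N*N - N : ℕ) : ENNReal) = (N:ENNReal) * ((N:ENNReal)-1) := by
  have h : ((N - 1 : ℕ) : ENNReal) = (N:ENNReal) - 1 := by
    simpa using ENNReal.natCast_sub N 1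
  rw [← h, ← Nat.cast_mul, Nat.mul_sub, Nat.mul_one]

/-- The uniform measure on distinct ordered pairs. -/
noncomputable def nuM (N : ℕ) : Measure (ZMod N × ZMod N) :=
  ((N : ENNReal) * ((N : ENNReal) - 1))⁻¹ •
    Measure.count.restrict {x : ZMod N × ZMod N | x.1 ≠ x.2}

theorem nuM_singleton (N : ℕ) (x : ZMod N × ZMod N) :
    nuM N {x} = if x.1 ≠ x.2 then ((N : ENNReal) * ((N : ENNReal) - 1))⁻¹ else 0 := by
  rw [nuM, Measure.smul_apply, smul_eq_mul,
    Measure.restrict_apply (MeasurableSet.singleton x)]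
  split_ifs with hx
  · rw [Set.inter_eq_self_of_subset_left (by simpa using hx), Measure.count_singleton, mul_one]
  · have : ({x} : Set (ZMod N × ZMod N)) ∩ {x : ZMod N × ZMod N | x.1 ≠ x.2} = ∅ := by
      ext y; simp only [Set.mem_inter_iff, Set.mem_singleton_iff, Set.mem_setOf_eq,
        Set.mem_empty_iff_false, iff_false, not_and]
      rintro rfl; simpa using hx
    rw [this, measure_empty, mul_zero]

instance nuM_prob (N : ℕ) [Fact N.Prime] : IsProbabilityMeasure (nuM N) := by
  constructor
  have hN : 2 ≤ N := (Fact.out : N.Prime).two_le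
  rw [nuM, Measure.smul_apply, smul_eq_mul, Measure.restrict_apply_univ, count_eq_natCard]
  have hcard : Nat.card {x : ZMod N × ZMod N | x.1 ≠ x.2}
      = Fintype.card {m : ZMod N × ZMod N // m.1 ≠ m.2} := Nat.card_eq_fintype_card
  rw [hcard, cardM, castM]
  refine ENNReal.inv_mul_cancel ?_ ?_
  · refine mul_ne_zero (Nat.cast_ne_zero.mpr (by omega)) ?_
    have h : ((N - 1 : ℕ) : ENNReal) = (N:ENNReal) - 1 := by simpa using ENNReal.natCast_sub N 1
    rw [← h]; exact Nat.cast_ne_zero.mpr (by omega)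
  · exact ENNReal.mul_ne_top (ENNReal.natCast_ne_top _) (by
      have h : ((N - 1 : ℕ) : ENNReal) = (N:ENNReal) - 1 := by simpa using ENNReal.natCast_sub N 1
      rw [← h]; exact ENNReal.natCast_ne_top _)

end DiscAux
namespace DiscAux

variable (N d : ℕ) [Fact N.Prime]

/-- The joint map sending the sample to all `d` coordinate pairs. -/
def pairMap (ω : DiscModel N d) : Fin d → ZMod N × ZMod N :=
  fun i => (discPoint N d 0 i ω, discPoint N d 1 i ω)

theorem discPoint0 (i : Fin d) (ω : DiscModel N d) :
    discPoint N d 0 i ω = (ω.1 i : ZMod N) * ω.2.2.1.1 + ω.2.1 i := by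
  simp [discPoint]

theorem discPoint1 (i : Fin d) (ω : DiscModel N d) :
    discPoint N d 1 i ω = (ω.1 i : ZMod N) * ω.2.2.1.2 + ω.2.1 i := by
  simp [discPoint]

/-- For a target `t` with distinct coordinates, the sample reproducing `t` given `m`. -/
noncomputable def eMap (t : Fin d → ZMod N × ZMod N) (h : ∀ i, (t i).1 ≠ (t i).2)
    (m : {m : ZMod N × ZMod N // m.1 ≠ m.2}) : DiscModel N d :=
  (fun i => ⟨((t i).1 - (t i).2) * (m.1.1 - m.1.2)⁻¹,
     mul_ne_zero (sub_ne_zero.mpr (h i)) (inv_ne_zero (sub_ne_zero.mpr m.2))⟩,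
   fun i => (t i).1 - ((t i).1 - (t i).2) * (m.1.1 - m.1.2)⁻¹ * m.1.1, m)

theorem preimage_eq (t : Fin d → ZMod N × ZMod N) (h : ∀ i, (t i).1 ≠ (t i).2) :
    pairMap N d ⁻¹' {t} = Set.range (eMap N d t h) := by
  ext ω
  simp only [Set.mem_preimage, Set.mem_singleton_iff, Set.mem_range]
  constructor
  · intro hω
    refine ⟨ω.2.2, ?_⟩
    have hu : ω.2.2.1.1 - ω.2.2.1.2 ≠ 0 := sub_ne_zero.mpr ω.2.2.2
    have h0 : ∀ i, (ω.1 i : ZMod N) * ω.2.2.1.1 + ω.2.1 i = (t i).1 := fun i => by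
      rw [← discPoint0]; exact congrArg Prod.fst (congrFun hω i)
    have h1 : ∀ i, (ω.1 i : ZMod N) * ω.2.2.1.2 + ω.2.1 i = (t i).2 := fun i => by
      rw [← discPoint1]; exact congrArg Prod.snd (congrFun hω i)
    have hg : ∀ i, (ω.1 i : ZMod N) = ((t i).1 - (t i).2) * (ω.2.2.1.1 - ω.2.2.1.2)⁻¹ := by
      intro i
      rw [eq_mul_inv_iff_mul_eq₀ hu]
      linear_combination h0 i - h1 i
    have hS : ∀ i, ω.2.1 i
        = (t i).1 - ((t i).1 - (t i).2) * (ω.2.2.1.1 - ω.2.2.1.2)⁻¹ * ω.2.2.1.1 := by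
      intro i
      rw [← hg i]
      linear_combination h0 i
    refine Prod.ext ?_ (Prod.ext ?_ rfl)
    · funext i; exact Subtype.ext (hg i).symm
    · funext i; exact (hS i).symm
  · rintro ⟨m, rfl⟩
    funext i
    have hu : m.1.1 - m.1.2 ≠ 0 := sub_ne_zero.mpr m.2
    have hc : (m.1.1 - m.1.2)⁻¹ * (m.1.1 - m.1.2) = 1 := inv_mul_cancel₀ hu
    show (discPoint N d 0 i _, discPoint N d 1 i _) = t i
    rw [discPoint0, discPoint1]
    refine Prod.ext ?_ ?_
    · show ((t i).1 - (t i).2) * (m.1.1 - m.1.2)⁻¹ * m.1.1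
        + ((t i).1 - ((t i).1 - (t i).2) * (m.1.1 - m.1.2)⁻¹ * m.1.1) = (t i).1
      ring
    · show ((t i).1 - (t i).2) * (m.1.1 - m.1.2)⁻¹ * m.1.2
        + ((t i).1 - ((t i).1 - (t i).2) * (m.1.1 - m.1.2)⁻¹ * m.1.1) = (t i).2
      linear_combination (-((t i).1 - (t i).2)) * hc

theorem eMap_inj (t : Fin d → ZMod N × ZMod N) (h : ∀ i, (t i).1 ≠ (t i).2) :
    Function.Injective (eMap N d t h) := fun m m' hmm =>
  congrArg (fun ω : DiscModel N d => ω.2.2) hmm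

theorem preimage_empty (t : Fin d → ZMod N × ZMod N) (i : Fin d) (hi : (t i).1 = (t i).2) :
    pairMap N d ⁻¹' {t} = ∅ := by
  ext ω
  simp only [Set.mem_preimage, Set.mem_singleton_iff, Set.mem_empty_iff_false, iff_false]
  intro hω
  have hu : ω.2.2.1.1 - ω.2.2.1.2 ≠ 0 := sub_ne_zero.mpr ω.2.2.2
  have h0 : (ω.1 i : ZMod N) * ω.2.2.1.1 + ω.2.1 i = (t i).1 := by
    rw [← discPoint0]; exact congrArg Prod.fst (congrFun hω i)
  have h1 : (ω.1 i : ZMod N) * ω.2.2.1.2 + ω.2.1 i = (t i).2 := by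
    rw [← discPoint1]; exact congrArg Prod.snd (congrFun hω i)
  have : (ω.1 i : ZMod N) * (ω.2.2.1.1 - ω.2.2.1.2) = 0 := by
    linear_combination h0 - h1 + hi
  exact mul_ne_zero (ω.1 i).2 hu this

theorem arith (hN : 2 ≤ N) :
    (((N - 1) ^ d : ℕ) : ENNReal)⁻¹ * ((N ^ d : ℕ) : ENNReal)⁻¹ * ((N * N - N : ℕ) : ENNReal)⁻¹
      * ((N * N - N : ℕ) : ENNReal) = (((N : ENNReal) * ((N : ENNReal) - 1))⁻¹) ^ d := by
  have hsub : ((N - 1 : ℕ) : ENNReal) = (N : ENNReal) - 1 := by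
    simpa using ENNReal.natCast_sub N 1
  have ha0 : (N : ENNReal) ≠ 0 := Nat.cast_ne_zero.mpr (by omega)
  have hat : (N : ENNReal) ≠ ⊤ := ENNReal.natCast_ne_top N
  have hb0 : (N : ENNReal) - 1 ≠ 0 := by rw [← hsub]; exact Nat.cast_ne_zero.mpr (by omega)
  have hbt : (N : ENNReal) - 1 ≠ ⊤ := by rw [← hsub]; exact ENNReal.natCast_ne_top _
  rw [castM, mul_assoc, ENNReal.inv_mul_cancel (mul_ne_zero ha0 hb0) (ENNReal.mul_ne_top hat hbt),
    mul_one, Nat.cast_pow, Nat.cast_pow, hsub, ← ENNReal.inv_pow, mul_pow,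
    ENNReal.mul_inv (Or.inl (pow_ne_zero _ ha0)) (Or.inl (ENNReal.pow_ne_top hat)), mul_comm]

end DiscAux
namespace DiscAux

variable (N d : ℕ) [Fact N.Prime]

theorem measurable_pairMap : Measurable (pairMap N d) := measurable_of_countable _

theorem map_pairMap :
    ((unif (Fin d → {x : ZMod N // x ≠ 0})).prod
        ((unif (Fin d → ZMod N)).prod (unif {m : ZMod N × ZMod N // m.1 ≠ m.2}))).map
        (pairMap N d)
      = Measure.pi (fun _ : Fin d => nuM N) := by
  have hN : 2 ≤ N := (Fact.out : N.Prime).two_le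
  apply Measure.ext_of_singleton
  intro t
  refine (Measure.map_apply (measurable_pairMap N d) (MeasurableSet.singleton t)).trans ?_
  rw [prod3_eq]
  show _ * (Measure.count : Measure (DiscModel N d)) (pairMap N d ⁻¹' {t}) = _
  rw [count_eq_natCard]
  have hrhs : Measure.pi (fun _ : Fin d => nuM N) {t} = ∏ i, nuM N {t i} := by
    rw [← Set.univ_pi_singleton t, Measure.pi_pi]
  rw [hrhs]
  by_cases hall : ∀ i, (t i).1 ≠ (t i).2
  · have hpre : Nat.card (pairMap N d ⁻¹' {t})
        = Fintype.card {m : ZMod N × ZMod N // m.1 ≠ m.2} := by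
      rw [preimage_eq N d t hall, Nat.card_range_of_injective (eMap_inj N d t hall),
        Nat.card_eq_fintype_card]
    rw [hpre, cardM]
    have hnu : ∀ i : Fin d, nuM N {t i} = ((N : ENNReal) * ((N : ENNReal) - 1))⁻¹ := fun i => by
      rw [nuM_singleton, if_pos (hall i)]
    rw [Finset.prod_congr rfl (fun i _ => hnu i), Finset.prod_const, Finset.card_univ,
      Fintype.card_fin]
    have hcards : Fintype.card (Fin d → {x : ZMod N // x ≠ 0}) = (N - 1) ^ d := by
      rw [Fintype.card_fun, cardne, Fintype.card_fin]
    have hcards2 : Fintype.card (Fin d → ZMod N) = N ^ d := by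
      rw [Fintype.card_fun, ZMod.card, Fintype.card_fin]
    rw [hcards, hcards2]
    exact arith N d hN
  · push_neg at hall
    obtain ⟨i, hi⟩ := hall
    rw [preimage_empty N d t i hi]
    have hz : (Nat.card (∅ : Set (DiscModel N d)) : ENNReal) = 0 := by simp
    rw [hz, mul_zero]
    refine (Finset.prod_eq_zero (Finset.mem_univ i) ?_).symm
    rw [nuM_singleton, if_neg (by simpa using hi)]

end DiscAux
open DiscAux in
/-- Let `N` be prime and `d ≥ 1`. In the discrete model of the randomly shifted rank-1 lattice,
the `d` coordinate pairs `(p_1^{(i)}, p_2^{(i)})`, `i = 1,…,d`, are independent and identically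
distributed, each uniform on ordered pairs of distinct elements of `(1/N)·{0,…,N-1}`
(encoded by `ZMod N`). -/
theorem discrete_model_coordinate_pairs_iid
    (N d : ℕ) [Fact N.Prime] (hd : 1 ≤ d)
    (μ : Measure (DiscModel N d))
    (hμ : μ = ((unif (Fin d → {x : ZMod N // x ≠ 0})).prod
      ((unif (Fin d → ZMod N)).prod (unif {m : ZMod N × ZMod N // m.1 ≠ m.2})))) :
    iIndepFun
      (fun i ω => (discPoint N d 0 i ω, discPoint N d 1 i ω)) μ ∧
    ∀ i : Fin d,
      μ.map (fun ω => (discPoint N d 0 i ω, discPoint N d 1 i ω))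
        = ((N : ENNReal) * ((N : ENNReal) - 1))⁻¹ •
            Measure.count.restrict {x : ZMod N × ZMod N | x.1 ≠ x.2} := by
  have hF : Measurable (pairMap N d) := measurable_pairMap N d
  have hmap : μ.map (pairMap N d) = Measure.pi (fun _ : Fin d => nuM N) := by
    rw [hμ]; exact map_pairMap N d
  have hmarg : ∀ i : Fin d,
      μ.map (fun ω => (discPoint N d 0 i ω, discPoint N d 1 i ω)) = nuM N := by
    intro i
    have hcomp : (fun ω => (discPoint N d 0 i ω, discPoint N d 1 i ω))
        = (Function.eval i) ∘ pairMap N d := rfl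
    rw [hcomp, ← Measure.map_map (measurable_of_countable _) hF, hmap]
    apply Measure.ext_of_singleton
    intro x
    rw [Measure.map_apply (measurable_of_countable _) (MeasurableSet.singleton x)]
    have hev : (Function.eval i : (Fin d → ZMod N × ZMod N) → ZMod N × ZMod N) ⁻¹' {x}
        = Set.univ.pi (fun j => (if j = i then {x} else Set.univ : Set (ZMod N × ZMod N))) := by
      ext ω
      simp only [Set.mem_preimage, Set.mem_singleton_iff, Set.mem_pi, Set.mem_univ,
        true_implies, Function.eval]
      constructor
      · intro hx j
        split_ifs with hj
        · subst hj; exact hx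
        · trivial
      · intro hx
        have := hx i
        rwa [if_pos rfl] at this
    rw [hev, Measure.pi_pi]
    have hone : ∀ j : Fin d, (nuM N) (if j = i then {x} else Set.univ : Set (ZMod N × ZMod N))
        = (if j = i then (nuM N) {x} else 1) := fun j => by split_ifs <;> simp
    rw [Finset.prod_congr rfl (fun j _ => hone j),
      Finset.prod_ite_eq' Finset.univ i (fun _ => (nuM N) {x}), if_pos (Finset.mem_univ i)]
  constructor
  · rw [iIndepFun_iff_measure_inter_preimage_eq_mul]
    intro S sets hsets
    have hpre : (⋂ i ∈ S, (fun ω => (discPoint N d 0 i ω, discPoint N d 1 i ω)) ⁻¹' sets i)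
        = pairMap N d ⁻¹' (Set.pi ↑S sets) := by
      ext ω
      simp [pairMap, Set.mem_pi]
    rw [hpre, ← Measure.map_apply hF ((Set.to_countable _).measurableSet), hmap]

    have hterm : ∀ i ∈ S,
        μ ((fun ω => (discPoint N d 0 i ω, discPoint N d 1 i ω)) ⁻¹' sets i)
          = nuM N (sets i) := fun i _ => by
      rw [← Measure.map_apply (measurable_of_countable _) ((Set.to_countable _).measurableSet),
        hmarg i]
    rw [Finset.prod_congr rfl hterm]
    have hSpi : (Set.pi (↑S : Set (Fin d)) sets)
        = Set.univ.pi (fun j => (if j ∈ S then sets j else Set.univ : Set (ZMod N × ZMod N))) := by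
      ext ω
      simp only [Set.mem_pi, Set.mem_univ, true_implies, Finset.mem_coe]
      constructor
      · intro h j
        split_ifs with hj
        · exact h j hj
        · trivial
      · intro h j hj
        have := h j
        rwa [if_pos hj] at this
    rw [hSpi, Measure.pi_pi]
    have hone : ∀ j : Fin d, (nuM N) (if j ∈ S then sets j else Set.univ : Set (ZMod N × ZMod N))
        = (if j ∈ S then (nuM N) (sets j) else 1) := fun j => by split_ifs <;> simp
    rw [Finset.prod_congr rfl (fun j _ => hone j),
      Finset.prod_ite_mem Finset.univ S (fun j => (nuM N) (sets j)), Finset.univ_inter]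
  · exact fun i => hmarg i
end

section
/- Let N be prime and d ≥ 1. The randomly shifted and jittered rank-1 lattice is pairwise negatively dependent: for any anchored boxes Q, R ⊆ [0,1)^d anchored at 1, P(p_1 ∈ Q, p_2 ∈ R) ≤ P(p_1 ∈ Q)·P(p_2 ∈ R). -/
open MeasureTheory ProbabilityTheory

/-- Sample space of the randomly shifted and jittered rank-1 lattice: a generating vector `g`
with nonzero coordinates (coordinates of `(1/N){1,…,N-1}` encoded by nonzero elements of
`ZMod N`), a shift `S`, a random permutation `π` and jitters `J_1,…,J_N`. -/
def RSJSpace (N d : ℕ) : Type :=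
  (Fin d → {x : ZMod N // x ≠ 0}) × (Fin d → ZMod N) × Equiv.Perm (Fin N) × (Fin N → Fin d → ℝ)

noncomputable instance (N d : ℕ) : MeasurableSpace (RSJSpace N d) :=
  inferInstanceAs (MeasurableSpace ((Fin d → {x : ZMod N // x ≠ 0}) × (Fin d → ZMod N) ×
    Equiv.Perm (Fin N) × (Fin N → Fin d → ℝ)))

/-- The distribution of the randomizations of the RSJ rank-1 lattice: `g`, `S`, `π` uniform,
jitters i.i.d. uniform on `[0, 1/N)^d`, all independent. -/
noncomputable def rsjMeasure (N d : ℕ) [NeZero N] : Measure (RSJSpace N d) :=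
  (unif (Fin d → {x : ZMod N // x ≠ 0})).prod
    ((unif (Fin d → ZMod N)).prod ((unif (Equiv.Perm (Fin N))).prod
      (Measure.pi fun _ : Fin N => Measure.pi fun _ : Fin d =>
        (N : ENNReal) • volume.restrict (Set.Ico (0 : ℝ) (1 / N)))))

/-- The `i`-th coordinate of the `j`-th point of the RSJ rank-1 lattice:
`p_j = y_{π(j)} + S + J_j mod 1` with `y_k = (k-1)g mod 1`. -/
noncomputable def rsjPoint (N d : ℕ) (j : Fin N) (i : Fin d) (ω : RSJSpace N d) : ℝ :=
  (((ω.1 i : ZMod N) * (((ω.2.2.1 j : ℕ) : ZMod N)) + ω.2.1 i).val : ℝ) / N + ω.2.2.2 j i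

/-- Sample space of Latin hypercube sampling: independent uniform permutations `π_1,…,π_d`
and i.i.d. uniforms `U_j^{(i)}`. -/
def LHSSpace (N d : ℕ) : Type :=
  (Fin d → Equiv.Perm (Fin N)) × (Fin N → Fin d → ℝ)

noncomputable instance (N d : ℕ) : MeasurableSpace (LHSSpace N d) :=
  inferInstanceAs (MeasurableSpace ((Fin d → Equiv.Perm (Fin N)) × (Fin N → Fin d → ℝ)))

/-- The distribution of the randomizations of Latin hypercube sampling. -/
noncomputable def lhsMeasure (N d : ℕ) : Measure (LHSSpace N d) :=
  (Measure.pi fun _ : Fin d => unif (Equiv.Perm (Fin N))).prod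
    (Measure.pi fun _ : Fin N => Measure.pi fun _ : Fin d =>
      volume.restrict (Set.Ico (0 : ℝ) 1))

/-- The `i`-th coordinate of the `j`-th point of Latin hypercube sampling:
`p_j^{(i)} = (π_i(j) - U_j^{(i)})/N`. -/
noncomputable def lhsPoint (N d : ℕ) (j : Fin N) (i : Fin d) (ω : LHSSpace N d) : ℝ :=
  (((ω.1 i j : ℕ) + 1 : ℝ) - ω.2 j i) / N

namespace RSJaux

instance (N : ℕ) : Countable (ZMod N) :=
  (ZMod.intCast_rightInverse (n := N)).injective.countable

instance (n : ℕ) : MeasurableSingletonClass (Equiv.Perm (Fin n)) := ⟨fun _ => trivial⟩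

/-! ### The jitter measure and one-dimensional slice weights -/

noncomputable def nuJ (N : ℕ) : Measure ℝ :=
  (N : ENNReal) • volume.restrict (Set.Ico (0 : ℝ) (1 / N))

theorem nuJ_prob (N : ℕ) (hN : 0 < N) : IsProbabilityMeasure (nuJ N) := by
  constructor
  rw [nuJ, Measure.smul_apply, Measure.restrict_apply MeasurableSet.univ, Set.univ_inter,
    Real.volume_Ico]
  rw [smul_eq_mul, ← ENNReal.ofReal_natCast, ← ENNReal.ofReal_mul (by positivity)]
  rw [sub_zero, mul_one_div, div_self (by positivity : (N : ℝ) ≠ 0)]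
  exact ENNReal.ofReal_one

noncomputable def alphaR (N c : ℕ) (x : ℝ) : ℝ := max 0 (min 1 ((c : ℝ) + 1 - N * x))

theorem alphaR_nonneg (N c : ℕ) (x : ℝ) : 0 ≤ alphaR N c x := le_max_left _ _

theorem alphaR_mono (N : ℕ) {c c' : ℕ} (h : c ≤ c') (x : ℝ) : alphaR N c x ≤ alphaR N c' x := by
  apply max_le_max le_rfl
  apply min_le_min le_rfl
  have : (c : ℝ) ≤ c' := Nat.cast_le.mpr h
  linarith

theorem ofReal_max_zero (z : ℝ) : ENNReal.ofReal (max 0 z) = ENNReal.ofReal z := by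
  rcases le_total z 0 with h | h
  · rw [max_eq_left h, ENNReal.ofReal_zero, eq_comm, ENNReal.ofReal_eq_zero]; exact h
  · rw [max_eq_right h]

theorem slice1d (N : ℕ) (hN : 0 < N) (c : ℕ) (hc : c < N) (x : ℝ) :
    nuJ N {t : ℝ | (c : ℝ) / N + t ∈ Set.Ico x 1} = ENNReal.ofReal (alphaR N c x) := by
  have hNR : (0 : ℝ) < N := by exact_mod_cast hN
  have hset : {t : ℝ | (c : ℝ) / N + t ∈ Set.Ico x 1} = Set.Ico (x - c / N) (1 - c / N) := by
    ext t
    simp only [Set.mem_setOf_eq, Set.mem_Ico]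
    constructor <;> rintro ⟨h1, h2⟩ <;> constructor <;> linarith
  rw [hset, nuJ, Measure.smul_apply, Measure.restrict_apply measurableSet_Ico,
    Set.Ico_inter_Ico, Real.volume_Ico]
  have hc1 : (c : ℝ) + 1 ≤ N := by exact_mod_cast hc
  have hmin : min (1 - (c : ℝ) / N) (1 / N) = 1 / N := by
    apply min_eq_right
    rw [le_sub_iff_add_le, ← add_div, div_le_one hNR]
    linarith
  rw [hmin, smul_eq_mul, ← ENNReal.ofReal_natCast, ← ENNReal.ofReal_mul (by positivity)]
  rw [alphaR, ofReal_max_zero]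
  congr 1
  rcases le_total x ((c : ℝ) / N) with h | h
  · have hxc : x * N ≤ c := (le_div_iff₀ hNR).mp h
    rw [max_eq_right (by linarith), min_eq_left (by nlinarith)]
    field_simp
    ring
  · have hxc : (c : ℝ) ≤ x * N := (div_le_iff₀ hNR).mp h
    rw [max_eq_left (by linarith), min_eq_right (by nlinarith)]
    field_simp
    ring

/-! ### Slices of the jitter product measure -/

theorem pi_slice_pair {N d : ℕ} (m : Measure (Fin d → ℝ)) [IsProbabilityMeasure m]
    [SigmaFinite m] (j0 j1 : Fin N) (hne : j0 ≠ j1) (T0 T1 : Set (Fin d → ℝ)) :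
    (Measure.pi fun _ : Fin N => m) {J | J j0 ∈ T0 ∧ J j1 ∈ T1} = m T0 * m T1 := by
  have hset : {J : Fin N → Fin d → ℝ | J j0 ∈ T0 ∧ J j1 ∈ T1} =
      Set.pi Set.univ (fun j => if j = j0 then T0 else if j = j1 then T1 else Set.univ) := by
    ext J
    simp only [Set.mem_setOf_eq, Set.mem_pi, Set.mem_univ, forall_true_left]
    constructor
    · rintro ⟨h0, h1⟩ j
      by_cases hj : j = j0
      · subst hj; simpa using h0
      · by_cases hj1 : j = j1
        · subst hj1; simp [if_neg hj, h1]
        · simp [if_neg hj, if_neg hj1]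
    · intro h
      refine ⟨by simpa using h j0, ?_⟩
      have := h j1
      rwa [if_neg (Ne.symm hne), if_pos rfl] at this
  rw [hset, Measure.pi_pi]
  have h1 : ∀ x ∈ Finset.univ, x ∉ ({j0, j1} : Finset (Fin N)) →
      m (if x = j0 then T0 else if x = j1 then T1 else Set.univ) = 1 := by
    intro x _ hx
    simp only [Finset.mem_insert, Finset.mem_singleton, not_or] at hx
    rw [if_neg hx.1, if_neg hx.2, measure_univ]
  rw [← Finset.prod_subset (Finset.subset_univ ({j0, j1} : Finset (Fin N))) h1,
    Finset.prod_insert (by simpa using hne), Finset.prod_singleton,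
    if_pos rfl, if_neg (Ne.symm hne), if_pos rfl]

theorem pi_slice_single {N d : ℕ} (m : Measure (Fin d → ℝ)) [IsProbabilityMeasure m]
    [SigmaFinite m] (j0 : Fin N) (T0 : Set (Fin d → ℝ)) :
    (Measure.pi fun _ : Fin N => m) {J | J j0 ∈ T0} = m T0 := by
  have hset : {J : Fin N → Fin d → ℝ | J j0 ∈ T0} =
      Set.pi Set.univ (fun j => if j = j0 then T0 else Set.univ) := by
    ext J
    simp only [Set.mem_setOf_eq, Set.mem_pi, Set.mem_univ, forall_true_left]
    constructor
    · intro h0 j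
      by_cases hj : j = j0
      · subst hj; simpa using h0
      · simp [if_neg hj]
    · intro h
      simpa using h j0
  rw [hset, Measure.pi_pi]
  have h1 : ∀ x ∈ Finset.univ, x ∉ ({j0} : Finset (Fin N)) →
      m (if x = j0 then T0 else Set.univ) = 1 := by
    intro x _ hx
    simp only [Finset.mem_singleton] at hx
    rw [if_neg hx, measure_univ]
  rw [← Finset.prod_subset (Finset.subset_univ ({j0} : Finset (Fin N))) h1,
    Finset.prod_singleton, if_pos rfl]

/-! ### Probabilities and averages over finite uniform randomness -/

theorem unif_prob (α : Type*) [Fintype α] [Nonempty α] [MeasurableSpace α] :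
    IsProbabilityMeasure (unif α) := by
  constructor
  rw [unif, Measure.smul_apply, Measure.count_univ, smul_eq_mul]
  rw [ENat.card_eq_coe_fintype_card, ENat.toENNReal_coe]
  exact ENNReal.inv_mul_cancel (by exact_mod_cast Fintype.card_ne_zero (α := α)) (ENNReal.natCast_ne_top _)

theorem lintegral_unif {α : Type*} [Fintype α] [MeasurableSpace α] [MeasurableSingletonClass α]
    (f : α → ENNReal) :
    ∫⁻ x, f x ∂(unif α) = (Fintype.card α : ENNReal)⁻¹ * ∑ x, f x := by
  rw [unif, lintegral_smul_measure, lintegral_count, tsum_fintype, smul_eq_mul]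

theorem unif_avg_const (α : Type*) [Fintype α] [Nonempty α] (x : ENNReal) :
    (Fintype.card α : ENNReal)⁻¹ * ∑ _a : α, x = x := by
  rw [Finset.sum_const, Finset.card_univ, nsmul_eq_mul, ← mul_assoc,
    ENNReal.inv_mul_cancel (by exact_mod_cast Fintype.card_ne_zero) (ENNReal.natCast_ne_top _),
    one_mul]

/-! ### Expressing the RSJ measure as iterated finite averages -/

theorem rsj_apply (N d : ℕ) [Fact N.Prime] (E : Set (RSJSpace N d)) (hE : MeasurableSet E) :
    rsjMeasure N d E = (Fintype.card (Fin d → {x : ZMod N // x ≠ 0}) : ENNReal)⁻¹ *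
      ∑ g : Fin d → {x : ZMod N // x ≠ 0}, ((Fintype.card (Fin d → ZMod N) : ENNReal)⁻¹ *
        ∑ S : Fin d → ZMod N, ((Fintype.card (Equiv.Perm (Fin N)) : ENNReal)⁻¹ *
          ∑ π : Equiv.Perm (Fin N),
            (Measure.pi fun _ : Fin N => Measure.pi fun _ : Fin d => nuJ N)
              {J | (g, S, π, J) ∈ E})) := by
  have hprime : N.Prime := Fact.out
  haveI : NeZero N := ⟨hprime.ne_zero⟩
  haveI : Fact (1 < N) := ⟨hprime.one_lt⟩
  haveI : Nonempty {x : ZMod N // x ≠ 0} := ⟨⟨1, one_ne_zero⟩⟩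
  haveI := nuJ_prob N hprime.pos
  haveI := unif_prob (Fin d → {x : ZMod N // x ≠ 0})
  haveI := unif_prob (Fin d → ZMod N)
  haveI := unif_prob (Equiv.Perm (Fin N))
  have hμJ : (Measure.pi fun _ : Fin N => Measure.pi fun _ : Fin d =>
      (N : ENNReal) • volume.restrict (Set.Ico (0 : ℝ) (1 / N))) =
      (Measure.pi fun _ : Fin N => Measure.pi fun _ : Fin d => nuJ N) := rfl
  rw [rsjMeasure, hμJ]
  erw [Measure.prod_apply hE, lintegral_unif]
  congr 1
  refine Finset.sum_congr rfl fun g _ => ?_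
  rw [Measure.prod_apply (measurable_prodMk_left hE), lintegral_unif]
  congr 1
  refine Finset.sum_congr rfl fun S _ => ?_
  rw [Measure.prod_apply (measurable_prodMk_left (measurable_prodMk_left hE)), lintegral_unif]
  congr 1

/-! ### Measurability of the events -/

theorem measurable_from_countable_fst {α β γ : Type*} [Countable α] [MeasurableSpace α]
    [MeasurableSingletonClass α] [MeasurableSpace β] [MeasurableSpace γ] {f : α × β → γ}
    (hf : ∀ a, Measurable fun b => f (a, b)) : Measurable f := by
  have h : Measurable (f ∘ Prod.swap) := measurable_from_prod_countable_left hf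
  have heq : f = (f ∘ Prod.swap) ∘ Prod.swap := by ext p; simp
  rw [heq]
  exact h.comp measurable_swap

theorem measurable_rsjPoint (N d : ℕ) (j : Fin N) (i : Fin d) :
    Measurable (rsjPoint N d j i) := by
  apply measurable_from_countable_fst
  intro g
  apply measurable_from_countable_fst
  intro S
  apply measurable_from_countable_fst
  intro π
  have h2 : Measurable fun J : Fin N → Fin d → ℝ => J j i :=
    (measurable_pi_apply i).comp (measurable_pi_apply j)
  exact Measurable.add
    (measurable_const (a := (((g i : ZMod N) * (((π j : ℕ) : ZMod N)) + S i).val : ℝ) / N)) h2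

theorem measurable_event (N d : ℕ) (j : Fin N) (a : Fin d → ℝ) :
    MeasurableSet {ω : RSJSpace N d | ∀ i, rsjPoint N d j i ω ∈ Set.Ico (a i) 1} := by
  have h : {ω : RSJSpace N d | ∀ i, rsjPoint N d j i ω ∈ Set.Ico (a i) 1} =
      ⋂ i, (rsjPoint N d j i) ⁻¹' (Set.Ico (a i) 1) := by ext ω; simp [Set.mem_iInter]
  rw [h]
  exact MeasurableSet.iInter fun i => (measurable_rsjPoint N d j i) measurableSet_Ico


/-! ### Cells and boxes -/

noncomputable def cellv (N d : ℕ) (g : Fin d → {x : ZMod N // x ≠ 0}) (S : Fin d → ZMod N)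
    (p : Fin N) (i : Fin d) : ZMod N :=
  (g i : ZMod N) * ((p : ℕ) : ZMod N) + S i

def Tbox (N d : ℕ) (c : Fin d → ZMod N) (q : Fin d → ℝ) : Set (Fin d → ℝ) :=
  {u | ∀ i, ((c i).val : ℝ) / N + u i ∈ Set.Ico (q i) 1}

theorem m_Tbox (N d : ℕ) [NeZero N] (c : Fin d → ZMod N) (q : Fin d → ℝ) :
    (Measure.pi fun _ : Fin d => nuJ N) (Tbox N d c q) =
      ∏ i, ENNReal.ofReal (alphaR N (c i).val (q i)) := by
  haveI := nuJ_prob N (Nat.pos_of_ne_zero (NeZero.ne N))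
  have hset : Tbox N d c q =
      Set.pi Set.univ (fun i => {t | ((c i).val : ℝ) / N + t ∈ Set.Ico (q i) 1}) := by
    ext u; simp [Tbox, Set.mem_pi]
  rw [hset, Measure.pi_pi]
  exact Finset.prod_congr rfl fun i _ =>
    slice1d N (Nat.pos_of_ne_zero (NeZero.ne N)) _ (ZMod.val_lt _) _

/-! ### Distributing cardinality constants into products -/

theorem card_fun_inv_mul (N d : ℕ) [NeZero N] (A : Fin d → ENNReal) :
    (Fintype.card (Fin d → ZMod N) : ENNReal)⁻¹ * ∏ i, A i =
      ∏ i, ((N : ENNReal)⁻¹ * A i) := by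
  rw [Finset.prod_mul_distrib, Finset.prod_const, Finset.card_univ, Fintype.card_fin]
  congr 1
  rw [Fintype.card_fun, ZMod.card, Fintype.card_fin, Nat.cast_pow, ← ENNReal.inv_pow]

theorem card_funG_inv_mul (N d : ℕ) [NeZero N] (A : Fin d → ENNReal) :
    (Fintype.card (Fin d → {x : ZMod N // x ≠ 0}) : ENNReal)⁻¹ * ∏ i, A i =
      ∏ i, ((Fintype.card {x : ZMod N // x ≠ 0} : ENNReal)⁻¹ * A i) := by
  rw [Finset.prod_mul_distrib, Finset.prod_const, Finset.card_univ, Fintype.card_fin]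
  congr 1
  rw [Fintype.card_fun, Fintype.card_fin, Nat.cast_pow, ← ENNReal.inv_pow]

/-! ### Evaluating the single-point probability -/

theorem single_eval (N d : ℕ) [Fact N.Prime] (j : Fin N) (q : Fin d → ℝ) :
    rsjMeasure N d {ω | ∀ i, rsjPoint N d j i ω ∈ Set.Ico (q i) 1} =
      ∏ i, ((N : ENNReal)⁻¹ * ∑ c : ZMod N, ENNReal.ofReal (alphaR N c.val (q i))) := by
  have hprime : N.Prime := Fact.out
  haveI : NeZero N := ⟨hprime.ne_zero⟩
  haveI : Fact (1 < N) := ⟨hprime.one_lt⟩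
  haveI : Nonempty {x : ZMod N // x ≠ 0} := ⟨⟨1, one_ne_zero⟩⟩
  haveI := nuJ_prob N hprime.pos
  rw [rsj_apply N d _ (measurable_event N d j q)]
  have hinner : ∀ (g : Fin d → {x : ZMod N // x ≠ 0}) (S : Fin d → ZMod N)
      (π : Equiv.Perm (Fin N)),
      (Measure.pi fun _ : Fin N => Measure.pi fun _ : Fin d => nuJ N)
        {J | (g, S, π, J) ∈ {ω : RSJSpace N d | ∀ i, rsjPoint N d j i ω ∈ Set.Ico (q i) 1}} =
      ∏ i, ENNReal.ofReal (alphaR N (cellv N d g S (π j) i).val (q i)) := by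
    intro g S π
    have h1 : {J : Fin N → Fin d → ℝ |
        (g, S, π, J) ∈ {ω : RSJSpace N d | ∀ i, rsjPoint N d j i ω ∈ Set.Ico (q i) 1}} =
        {J : Fin N → Fin d → ℝ | J j ∈ Tbox N d (cellv N d g S (π j)) q} := rfl
    rw [h1, pi_slice_single, m_Tbox]
  simp only [hinner]
  have hS : ∀ (g : Fin d → {x : ZMod N // x ≠ 0}) (p : Fin N),
      ∑ S : Fin d → ZMod N, ∏ i, ENNReal.ofReal (alphaR N (cellv N d g S p i).val (q i)) =
      ∏ i, ∑ c : ZMod N, ENNReal.ofReal (alphaR N c.val (q i)) := by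
    intro g p
    simp only [cellv]
    rw [← Fintype.piFinset_univ]
    refine (Finset.sum_prod_piFinset Finset.univ (fun i s =>
      ENNReal.ofReal (alphaR N ((g i : ZMod N) * ((p : ℕ) : ZMod N) + s).val (q i)))).trans ?_
    refine Finset.prod_congr rfl fun i _ => ?_
    exact Fintype.sum_equiv (Equiv.addLeft ((g i : ZMod N) * ((p : ℕ) : ZMod N)))
      _ _ (fun s => rfl)
  have hgS : ∀ g : Fin d → {x : ZMod N // x ≠ 0},
      (Fintype.card (Fin d → ZMod N) : ENNReal)⁻¹ *
        ∑ S : Fin d → ZMod N, ((Fintype.card (Equiv.Perm (Fin N)) : ENNReal)⁻¹ *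
          ∑ π : Equiv.Perm (Fin N),
            ∏ i, ENNReal.ofReal (alphaR N (cellv N d g S (π j) i).val (q i))) =
      ∏ i, ((N : ENNReal)⁻¹ * ∑ c : ZMod N, ENNReal.ofReal (alphaR N c.val (q i))) := by
    intro g
    have h2 : ∀ π : Equiv.Perm (Fin N),
        ∑ S : Fin d → ZMod N,
          ∏ i, ENNReal.ofReal (alphaR N (cellv N d g S (π j) i).val (q i)) =
        ∏ i, ∑ c : ZMod N, ENNReal.ofReal (alphaR N c.val (q i)) :=
      fun π => hS g (π j)
    rw [← Finset.mul_sum, Finset.sum_comm, Finset.sum_congr rfl fun π _ => h2 π,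
      unif_avg_const (Equiv.Perm (Fin N)), card_fun_inv_mul]
  rw [Finset.sum_congr rfl fun g _ => hgS g, unif_avg_const]

end RSJaux

namespace RSJaux

def mulRightNe (N : ℕ) [Fact N.Prime] (k : ZMod N) (hk : k ≠ 0) :
    {x : ZMod N // x ≠ 0} ≃ {x : ZMod N // x ≠ 0} where
  toFun u := ⟨(u : ZMod N) * k, mul_ne_zero u.2 hk⟩
  invFun u := ⟨(u : ZMod N) * k⁻¹, mul_ne_zero u.2 (inv_ne_zero hk)⟩
  left_inv u := by
    ext
    simp [mul_assoc, mul_inv_cancel₀ hk]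
  right_inv u := by
    ext
    simp [mul_assoc, inv_mul_cancel₀ hk]

theorem joint_eval (N d : ℕ) [Fact N.Prime] (j0 j1 : Fin N) (hne : j0 ≠ j1)
    (q r : Fin d → ℝ) :
    rsjMeasure N d {ω : RSJSpace N d | (∀ i, rsjPoint N d j0 i ω ∈ Set.Ico (q i) 1) ∧
        (∀ i, rsjPoint N d j1 i ω ∈ Set.Ico (r i) 1)} =
      ∏ i, ((Fintype.card {x : ZMod N // x ≠ 0} : ENNReal)⁻¹ * ((N : ENNReal)⁻¹ *
        ∑ u : {x : ZMod N // x ≠ 0}, ∑ c : ZMod N,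
          ENNReal.ofReal (alphaR N c.val (q i)) *
            ENNReal.ofReal (alphaR N (c + (u : ZMod N)).val (r i)))) := by
  have hprime : N.Prime := Fact.out
  haveI : NeZero N := ⟨hprime.ne_zero⟩
  haveI : Fact (1 < N) := ⟨hprime.one_lt⟩
  haveI : Nonempty {x : ZMod N // x ≠ 0} := ⟨⟨1, one_ne_zero⟩⟩
  haveI := nuJ_prob N hprime.pos
  have hEmeas : MeasurableSet {ω : RSJSpace N d |
      (∀ i, rsjPoint N d j0 i ω ∈ Set.Ico (q i) 1) ∧
      (∀ i, rsjPoint N d j1 i ω ∈ Set.Ico (r i) 1)} := by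
    have : {ω : RSJSpace N d | (∀ i, rsjPoint N d j0 i ω ∈ Set.Ico (q i) 1) ∧
        (∀ i, rsjPoint N d j1 i ω ∈ Set.Ico (r i) 1)} =
        {ω : RSJSpace N d | ∀ i, rsjPoint N d j0 i ω ∈ Set.Ico (q i) 1} ∩
        {ω : RSJSpace N d | ∀ i, rsjPoint N d j1 i ω ∈ Set.Ico (r i) 1} := rfl
    rw [this]
    exact (measurable_event N d j0 q).inter (measurable_event N d j1 r)
  rw [rsj_apply N d _ hEmeas]
  have hinner : ∀ (g : Fin d → {x : ZMod N // x ≠ 0}) (S : Fin d → ZMod N)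
      (π : Equiv.Perm (Fin N)),
      (Measure.pi fun _ : Fin N => Measure.pi fun _ : Fin d => nuJ N)
        {J | (g, S, π, J) ∈ {ω : RSJSpace N d |
          (∀ i, rsjPoint N d j0 i ω ∈ Set.Ico (q i) 1) ∧
          (∀ i, rsjPoint N d j1 i ω ∈ Set.Ico (r i) 1)}} =
      ∏ i, (ENNReal.ofReal (alphaR N (cellv N d g S (π j0) i).val (q i)) *
        ENNReal.ofReal (alphaR N (cellv N d g S (π j1) i).val (r i))) := by
    intro g S π
    have h1 : {J : Fin N → Fin d → ℝ | (g, S, π, J) ∈ {ω : RSJSpace N d |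
        (∀ i, rsjPoint N d j0 i ω ∈ Set.Ico (q i) 1) ∧
        (∀ i, rsjPoint N d j1 i ω ∈ Set.Ico (r i) 1)}} =
        {J : Fin N → Fin d → ℝ | J j0 ∈ Tbox N d (cellv N d g S (π j0)) q ∧
          J j1 ∈ Tbox N d (cellv N d g S (π j1)) r} := rfl
    rw [h1, pi_slice_pair _ j0 j1 hne, m_Tbox, m_Tbox, ← Finset.prod_mul_distrib]
  simp only [hinner]
  -- the nonzero difference of lattice indices
  have hk : ∀ π : Equiv.Perm (Fin N),
      (((π j1 : ℕ) : ZMod N) - ((π j0 : ℕ) : ZMod N)) ≠ 0 := by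
    intro π
    rw [sub_ne_zero]
    intro hEq
    have h0 : ((π j1 : ℕ) : ZMod N).val = ((π j0 : ℕ) : ZMod N).val := by rw [hEq]
    rw [ZMod.val_natCast_of_lt (π j1).2, ZMod.val_natCast_of_lt (π j0).2] at h0
    exact hne (π.injective (Fin.ext h0)).symm
  have hS : ∀ (g : Fin d → {x : ZMod N // x ≠ 0}) (π : Equiv.Perm (Fin N)),
      ∑ S : Fin d → ZMod N,
        ∏ i, (ENNReal.ofReal (alphaR N (cellv N d g S (π j0) i).val (q i)) *
          ENNReal.ofReal (alphaR N (cellv N d g S (π j1) i).val (r i))) =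
      ∏ i, ∑ c : ZMod N, ENNReal.ofReal (alphaR N c.val (q i)) *
        ENNReal.ofReal (alphaR N (c + (g i : ZMod N) *
          (((π j1 : ℕ) : ZMod N) - ((π j0 : ℕ) : ZMod N))).val (r i)) := by
    intro g π
    simp only [cellv]
    rw [← Fintype.piFinset_univ]
    refine (Finset.sum_prod_piFinset Finset.univ (fun i s =>
      ENNReal.ofReal (alphaR N ((g i : ZMod N) * ((π j0 : ℕ) : ZMod N) + s).val (q i)) *
        ENNReal.ofReal (alphaR N ((g i : ZMod N) * ((π j1 : ℕ) : ZMod N) + s).val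
          (r i)))).trans ?_
    refine Finset.prod_congr rfl fun i _ => ?_
    refine Fintype.sum_equiv (Equiv.addLeft ((g i : ZMod N) * ((π j0 : ℕ) : ZMod N)))
      _ _ (fun s => ?_)
    have harg : (g i : ZMod N) * ((π j1 : ℕ) : ZMod N) + s =
        ((g i : ZMod N) * ((π j0 : ℕ) : ZMod N) + s) + (g i : ZMod N) *
          (((π j1 : ℕ) : ZMod N) - ((π j0 : ℕ) : ZMod N)) := by ring
    rw [harg]
    rfl
  have hg : ∀ π : Equiv.Perm (Fin N),
      ∑ g : Fin d → {x : ZMod N // x ≠ 0},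
        ∏ i, ∑ c : ZMod N, ENNReal.ofReal (alphaR N c.val (q i)) *
          ENNReal.ofReal (alphaR N (c + (g i : ZMod N) *
            (((π j1 : ℕ) : ZMod N) - ((π j0 : ℕ) : ZMod N))).val (r i)) =
      ∏ i, ∑ u : {x : ZMod N // x ≠ 0}, ∑ c : ZMod N,
        ENNReal.ofReal (alphaR N c.val (q i)) *
          ENNReal.ofReal (alphaR N (c + (u : ZMod N)).val (r i)) := by
    intro π
    rw [← Fintype.piFinset_univ]
    refine (Finset.sum_prod_piFinset Finset.univ (fun i (u : {x : ZMod N // x ≠ 0}) =>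
      ∑ c : ZMod N, ENNReal.ofReal (alphaR N c.val (q i)) *
        ENNReal.ofReal (alphaR N (c + (u : ZMod N) *
          (((π j1 : ℕ) : ZMod N) - ((π j0 : ℕ) : ZMod N))).val (r i)))).trans ?_
    refine Finset.prod_congr rfl fun i _ => ?_
    exact Fintype.sum_equiv (mulRightNe N _ (hk π))
      (fun u : {x : ZMod N // x ≠ 0} => ∑ c : ZMod N,
        ENNReal.ofReal (alphaR N c.val (q i)) *
          ENNReal.ofReal (alphaR N (c + (u : ZMod N) *
            (((π j1 : ℕ) : ZMod N) - ((π j0 : ℕ) : ZMod N))).val (r i)))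
      (fun u : {x : ZMod N // x ≠ 0} => ∑ c : ZMod N,
        ENNReal.ofReal (alphaR N c.val (q i)) *
          ENNReal.ofReal (alphaR N (c + (u : ZMod N)).val (r i)))
      (fun u => rfl)
  simp only [← Finset.mul_sum]
  have h3 : ∀ g : Fin d → {x : ZMod N // x ≠ 0},
      (∑ S : Fin d → ZMod N, ∑ π : Equiv.Perm (Fin N),
        ∏ i, (ENNReal.ofReal (alphaR N (cellv N d g S (π j0) i).val (q i)) *
          ENNReal.ofReal (alphaR N (cellv N d g S (π j1) i).val (r i)))) =
      ∑ π : Equiv.Perm (Fin N),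
        ∏ i, ∑ c : ZMod N, ENNReal.ofReal (alphaR N c.val (q i)) *
          ENNReal.ofReal (alphaR N (c + (g i : ZMod N) *
            (((π j1 : ℕ) : ZMod N) - ((π j0 : ℕ) : ZMod N))).val (r i)) := by
    intro g
    rw [Finset.sum_comm]
    exact Finset.sum_congr rfl fun π _ => hS g π
  rw [Finset.sum_congr rfl fun g _ => h3 g, Finset.sum_comm,
    Finset.sum_congr rfl fun π _ => hg π, unif_avg_const (Equiv.Perm (Fin N)),
    card_fun_inv_mul, card_funG_inv_mul]

end RSJaux

namespace RSJaux

theorem cheb (N : ℕ) [NeZero N] (f g : ZMod N → ℝ)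
    (hf : ∀ a b : ZMod N, a.val ≤ b.val → f a ≤ f b)
    (hg : ∀ a b : ZMod N, a.val ≤ b.val → g a ≤ g b) :
    (∑ c, f c) * (∑ c, g c) ≤ (N : ℝ) * ∑ c, f c * g c := by
  have hmv : MonovaryOn f g (Finset.univ : Finset (ZMod N)) := by
    intro a _ b _ hab
    rcases le_or_gt a.val b.val with h | h
    · exact hf _ _ h
    · exact absurd hab (not_lt.mpr (hg _ _ h.le))
  have := hmv.sum_mul_sum_le_card_mul_sum
  simpa [Finset.card_univ, ZMod.card] using this

theorem key_real (N : ℕ) [Fact N.Prime] (f g : ZMod N → ℝ)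
    (hf0 : ∀ c, 0 ≤ f c) (hg0 : ∀ c, 0 ≤ g c)
    (hf : ∀ a b : ZMod N, a.val ≤ b.val → f a ≤ f b)
    (hg : ∀ a b : ZMod N, a.val ≤ b.val → g a ≤ g b) :
    (N : ℝ) * ∑ u : {x : ZMod N // x ≠ 0}, ∑ c, f c * g (c + (u : ZMod N))
      ≤ ((N - 1 : ℕ) : ℝ) * ((∑ c, f c) * (∑ c, g c)) := by
  have hprime : N.Prime := Fact.out
  haveI : NeZero N := ⟨hprime.ne_zero⟩
  have hN2 : 2 ≤ N := hprime.two_le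
  have htot : ∑ δ : ZMod N, ∑ c, f c * g (c + δ) = (∑ c, f c) * (∑ c, g c) := by
    rw [Finset.sum_comm, Finset.sum_mul]
    refine Finset.sum_congr rfl fun c _ => ?_
    rw [Finset.mul_sum]
    exact Fintype.sum_equiv (Equiv.addLeft c) _ _ (fun δ => rfl)
  have hsub : ∑ u : {x : ZMod N // x ≠ 0}, ∑ c, f c * g (c + (u : ZMod N)) =
      ∑ δ ∈ Finset.univ.erase (0 : ZMod N), ∑ c, f c * g (c + δ) := by
    exact (Finset.sum_subtype (Finset.univ.erase (0 : ZMod N))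
      (fun x => by simp [Finset.mem_erase]) (fun δ => ∑ c, f c * g (c + δ))).symm
  have herase : ∑ δ ∈ Finset.univ.erase (0 : ZMod N), ∑ c, f c * g (c + δ) =
      (∑ c, f c) * (∑ c, g c) - ∑ c, f c * g c := by
    have h0 : (∑ c, f c * g (c + (0 : ZMod N))) +
        ∑ δ ∈ Finset.univ.erase (0 : ZMod N), ∑ c, f c * g (c + δ) =
        ∑ δ : ZMod N, ∑ c, f c * g (c + δ) :=
      Finset.add_sum_erase (Finset.univ : Finset (ZMod N))
        (fun δ => ∑ c, f c * g (c + δ)) (Finset.mem_univ 0)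
    simp only [add_zero] at h0
    rw [htot] at h0
    linarith
  rw [hsub, herase]
  have hcheb := cheb N f g hf hg
  have hT : 0 ≤ ∑ c, f c * g c :=
    Finset.sum_nonneg fun c _ => mul_nonneg (hf0 c) (hg0 c)
  have hP : 0 ≤ (∑ c, f c) * (∑ c, g c) :=
    mul_nonneg (Finset.sum_nonneg fun c _ => hf0 c) (Finset.sum_nonneg fun c _ => hg0 c)
  have hcast : ((N - 1 : ℕ) : ℝ) = (N : ℝ) - 1 := by
    rw [Nat.cast_sub (by omega), Nat.cast_one]
  rw [hcast]
  nlinarith [hcheb]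

theorem coord_bridge (N : ℕ) (hN : 2 ≤ N) (X Ya Yb : ℝ) (hX : 0 ≤ X) (hYa : 0 ≤ Ya)
    (hYb : 0 ≤ Yb) (h : (N : ℝ) * X ≤ ((N - 1 : ℕ) : ℝ) * (Ya * Yb)) :
    ((N - 1 : ℕ) : ENNReal)⁻¹ * ((N : ENNReal)⁻¹ * ENNReal.ofReal X) ≤
      ((N : ENNReal)⁻¹ * ENNReal.ofReal Ya) * ((N : ENNReal)⁻¹ * ENNReal.ofReal Yb) := by
  have e : ∀ m : ℕ, 0 < m → ((m : ℕ) : ENNReal)⁻¹ = ENNReal.ofReal ((m : ℝ)⁻¹) := by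
    intro m hm
    rw [← ENNReal.ofReal_natCast, ← ENNReal.ofReal_inv_of_pos (by exact_mod_cast hm)]
  have hm1 : (0 : ℝ) < ((N - 1 : ℕ) : ℝ) := by
    have : 1 ≤ N - 1 := by omega
    exact_mod_cast Nat.lt_of_lt_of_le Nat.zero_lt_one this
  have hn : (0 : ℝ) < (N : ℝ) := by positivity
  rw [e (N - 1) (by omega), e N (by omega), ← ENNReal.ofReal_mul (by positivity),
    ← ENNReal.ofReal_mul (by positivity), ← ENNReal.ofReal_mul (by positivity),
    ← ENNReal.ofReal_mul (by positivity), ← ENNReal.ofReal_mul (by positivity)]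
  apply ENNReal.ofReal_le_ofReal
  have hrw1 : ((N - 1 : ℕ) : ℝ)⁻¹ * ((N : ℝ)⁻¹ * X) = X / (((N - 1 : ℕ) : ℝ) * N) := by
    field_simp
  have hrw2 : (N : ℝ)⁻¹ * Ya * ((N : ℝ)⁻¹ * Yb) = Ya * Yb / ((N : ℝ) * N) := by
    field_simp
  rw [hrw1, hrw2, div_le_div_iff₀ (by positivity) (by positivity)]
  nlinarith [mul_le_mul_of_nonneg_right h hn.le]

theorem card_ne_zero_subtype (N : ℕ) [Fact N.Prime] :
    Fintype.card {x : ZMod N // x ≠ 0} = N - 1 := by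
  have hprime : N.Prime := Fact.out
  haveI : NeZero N := ⟨hprime.ne_zero⟩
  have := Fintype.card_subtype_compl (p := fun x : ZMod N => x = 0)
  simpa [ZMod.card, Fintype.card_subtype_eq] using this

end RSJaux


open RSJaux

/-- Let `N` be prime and `d ≥ 1`. The randomly shifted and jittered rank-1 lattice is pairwise
negatively dependent: for any boxes `Q, R ⊆ [0,1)^d` anchored at `1`,
`P(p_1 ∈ Q, p_2 ∈ R) ≤ P(p_1 ∈ Q)·P(p_2 ∈ R)`. -/
theorem rsj_lattice_pairwise_negatively_dependent (N d : ℕ) [Fact N.Prime] (hd : 1 ≤ d)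
    (q r : Fin d → ℝ) (hq : ∀ i, q i ∈ Set.Ico (0 : ℝ) 1) (hr : ∀ i, r i ∈ Set.Ico (0 : ℝ) 1) :
    rsjMeasure N d {ω |
        (∀ i, rsjPoint N d ⟨0, (Fact.out (p := N.Prime)).pos⟩ i ω ∈ Set.Ico (q i) 1) ∧
        (∀ i, rsjPoint N d ⟨1, (Fact.out (p := N.Prime)).one_lt⟩ i ω ∈ Set.Ico (r i) 1)}
      ≤ rsjMeasure N d {ω |
            ∀ i, rsjPoint N d ⟨0, (Fact.out (p := N.Prime)).pos⟩ i ω ∈ Set.Ico (q i) 1} *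
        rsjMeasure N d {ω |
            ∀ i, rsjPoint N d ⟨1, (Fact.out (p := N.Prime)).one_lt⟩ i ω ∈ Set.Ico (r i) 1} := by
  have hprime : N.Prime := Fact.out
  have hne : (⟨0, (Fact.out (p := N.Prime)).pos⟩ : Fin N) ≠
      ⟨1, (Fact.out (p := N.Prime)).one_lt⟩ := by
    simp [Fin.ext_iff]
  rw [joint_eval N d _ _ hne q r, single_eval N d _ q, single_eval N d _ r,
    ← Finset.prod_mul_distrib]
  refine Finset.prod_le_prod' fun i _ => ?_
  have hf0 : ∀ c : ZMod N, 0 ≤ alphaR N c.val (q i) := fun c => alphaR_nonneg _ _ _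
  have hg0 : ∀ c : ZMod N, 0 ≤ alphaR N c.val (r i) := fun c => alphaR_nonneg _ _ _
  have h1 : ∀ (x : Fin d → ℝ), (∑ c : ZMod N, ENNReal.ofReal (alphaR N c.val (x i))) =
      ENNReal.ofReal (∑ c : ZMod N, alphaR N c.val (x i)) :=
    fun x => (ENNReal.ofReal_sum_of_nonneg (fun c _ => alphaR_nonneg _ _ _)).symm
  have h2 : (∑ u : {x : ZMod N // x ≠ 0}, ∑ c : ZMod N,
      ENNReal.ofReal (alphaR N c.val (q i)) *
        ENNReal.ofReal (alphaR N (c + (u : ZMod N)).val (r i))) =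
      ENNReal.ofReal (∑ u : {x : ZMod N // x ≠ 0}, ∑ c : ZMod N,
        alphaR N c.val (q i) * alphaR N (c + (u : ZMod N)).val (r i)) := by
    simp_rw [← ENNReal.ofReal_mul (alphaR_nonneg N _ (q i))]
    rw [Finset.sum_congr rfl fun u _ => (ENNReal.ofReal_sum_of_nonneg (fun c _ =>
      mul_nonneg (alphaR_nonneg _ _ _) (alphaR_nonneg _ _ _))).symm]
    exact (ENNReal.ofReal_sum_of_nonneg (fun u _ => Finset.sum_nonneg fun c _ =>
      mul_nonneg (alphaR_nonneg _ _ _) (alphaR_nonneg _ _ _))).symm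
  rw [h1 q, h1 r, h2, card_ne_zero_subtype N]
  have hkey := key_real N (fun c => alphaR N c.val (q i)) (fun c => alphaR N c.val (r i))
    hf0 hg0 (fun a b h => alphaR_mono N h (q i)) (fun a b h => alphaR_mono N h (r i))
  exact coord_bridge N hprime.two_le _ _ _
    (Finset.sum_nonneg fun u _ => Finset.sum_nonneg fun c _ =>
      mul_nonneg (alphaR_nonneg _ _ _) (alphaR_nonneg _ _ _))
    (Finset.sum_nonneg fun c _ => alphaR_nonneg _ _ _)
    (Finset.sum_nonneg fun c _ => alphaR_nonneg _ _ _) hkey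
end

section
/- Let N be prime, d ≥ 1, and let a, b ∈ (1/N)·(Z/NZ)^d with a^{(i)} ≠ b^{(i)} for every coordinate i. Then there exists exactly one rank-1 lattice shifted by an element of (1/N)·(Z/NZ)^d (i.e., exactly one set of the form (L + s) mod 1 with L a rank-1 lattice generated by some g ∈ ((1/N)({1,...,N-1}))^d) that contains both a and b. -/
/-!
Two distinct points `a = k₁ • g + s` and `b = k₂ • g + s` of a shifted line force
`a - b = (k₁ - k₂) • g` with `k₁ - k₂` invertible, so the line through them, parametrised as
`k • (a - b) + b`, is an invertible affine reparametrisation `k ↦ k * (k₁ - k₂) + k₂` of the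
original one.
-/

section ShiftedLine

variable (K : Type*) {V : Type*} [DivisionRing K] [AddCommGroup V] [Module K V]

/-- For `K = ZMod N` and `V = Fin d → ZMod N` this is the rank-1 lattice generated by `g`,
shifted by `s`. -/
def shiftedLine (g s : V) : Set V := {x | ∃ k : K, x = k • g + s}

variable {K}

theorem shiftedLine_smul_smul_add {c : K} (hc : c ≠ 0) (t : K) (g s : V) :
    shiftedLine K (c • g) (t • g + s) = shiftedLine K g s := by
  ext x
  constructor
  · rintro ⟨k, rfl⟩
    exact ⟨k * c + t, by rw [add_smul, mul_smul, add_assoc]⟩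
  · rintro ⟨k, rfl⟩
    refine ⟨(k - t) * c⁻¹, ?_⟩
    rw [smul_smul, inv_mul_cancel_right₀ hc, ← add_assoc, ← add_smul, sub_add_cancel]

theorem left_mem_shiftedLine_sub (a b : V) : a ∈ shiftedLine K (a - b) b :=
  ⟨1, by rw [one_smul, sub_add_cancel]⟩

theorem right_mem_shiftedLine_sub (a b : V) : b ∈ shiftedLine K (a - b) b :=
  ⟨0, by rw [zero_smul, zero_add]⟩

theorem shiftedLine_eq_shiftedLine_sub {g s a b : V} (ha : a ∈ shiftedLine K g s)
    (hb : b ∈ shiftedLine K g s) (hab : a ≠ b) :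
    shiftedLine K g s = shiftedLine K (a - b) b := by
  obtain ⟨k₁, rfl⟩ := ha
  obtain ⟨k₂, rfl⟩ := hb
  have hk : k₁ - k₂ ≠ 0 := sub_ne_zero.2 fun h => hab (by rw [h])
  have hdir : k₁ • g + s - (k₂ • g + s) = (k₁ - k₂) • g := by
    rw [add_sub_add_right_eq_sub, sub_smul]
  rw [hdir, shiftedLine_smul_smul_add hk]

end ShiftedLine

/-- Let `N` be prime, `d ≥ 1`, and let `a, b` be grid points (elements of `(1/N)·(ℤ/Nℤ)^d`,
encoded as `(ZMod N)^d`) with `a^{(i)} ≠ b^{(i)}` for every coordinate `i`. Then there exists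
exactly one shifted rank-1 lattice, i.e. exactly one set of the form `L + s` with
`L = {k·g : k ∈ ℤ/Nℤ}` for a generating vector `g` with all coordinates nonzero,
that contains both `a` and `b`. -/
theorem unique_shifted_lattice_through_two_points (N d : ℕ) [Fact N.Prime] (hd : 1 ≤ d)
    (a b : Fin d → ZMod N) (hab : ∀ i, a i ≠ b i) :
    ∃! X : Set (Fin d → ZMod N),
      (∃ (g s : Fin d → ZMod N), (∀ i, g i ≠ 0) ∧
        X = {x | ∃ k : ZMod N, x = k • g + s}) ∧ a ∈ X ∧ b ∈ X := by
  have hne : a ≠ b := fun h => hab ⟨0, hd⟩ (congrFun h _)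
  refine ⟨shiftedLine (ZMod N) (a - b) b,
    ⟨⟨a - b, b, fun i => sub_ne_zero.2 (hab i), rfl⟩,
      left_mem_shiftedLine_sub a b, right_mem_shiftedLine_sub a b⟩, ?_⟩
  rintro X ⟨⟨g, s, -, rfl⟩, ha, hb⟩
  exact shiftedLine_eq_shiftedLine_sub (K := ZMod N) ha hb hne
end

section
/- Let P = (p_j)_{j=1}^N be a sampling scheme in [0,1)^d such that for some coordinate i and some constant 0 < ε ≤ 1/2, almost surely the torus distance between p_1^{(i)} and p_2^{(i)} exceeds ε. Then P is not pairwise negatively dependent: there exist anchored boxes Q, R with P(p_1 ∈ Q, p_2 ∈ R) > P(p_1 ∈ Q)·P(p_2 ∈ R). -/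
open MeasureTheory ProbabilityTheory

/-- Distance on the one-dimensional torus `T = [0,1)`. -/
noncomputable def torusDist (x y : ℝ) : ℝ := min |x - y| (1 - |x - y|)

/-- Let `P = (p_j)_{j=1}^N` be a sampling scheme in `[0,1)^d` (each point uniform on `[0,1)^d`,
the tuple exchangeable) such that for some coordinate `i` and some constant `0 < ε ≤ 1/2`,
almost surely the torus distance between `p_1^{(i)}` and `p_2^{(i)}` exceeds `ε`. Then `P` is
not pairwise negatively dependent: there exist anchored boxes `Q, R` with
`P(p_1 ∈ Q, p_2 ∈ R) > P(p_1 ∈ Q)·P(p_2 ∈ R)`. -/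
theorem fixed_distance_not_pairwise_negatively_dependent
    (N d : ℕ) (hN : 2 ≤ N) (hd : 1 ≤ d)
    {Ω : Type*} [MeasurableSpace Ω] (μ : Measure Ω) [IsProbabilityMeasure μ]
    (p : Fin N → Ω → Fin d → ℝ) (hmeas : ∀ j, Measurable (p j))
    (hunif : ∀ j, μ.map (p j) = Measure.pi fun _ : Fin d => volume.restrict (Set.Ico (0 : ℝ) 1))
    (hexch : ∀ σ : Equiv.Perm (Fin N),
      μ.map (fun ω => fun j => p (σ j) ω) = μ.map (fun ω => fun j => p j ω))
    (i : Fin d) (ε : ℝ) (hε : 0 < ε) (hε' : ε ≤ 1 / 2)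
    (hdist : μ {ω | torusDist (p ⟨0, by omega⟩ ω i) (p ⟨1, by omega⟩ ω i) ≤ ε} = 0) :
    ∃ q r : Fin d → ℝ, (∀ k, q k ∈ Set.Ico (0 : ℝ) 1) ∧ (∀ k, r k ∈ Set.Ico (0 : ℝ) 1) ∧
      μ {ω | (∀ k, p ⟨0, by omega⟩ ω k ∈ Set.Ico (q k) 1) ∧
          (∀ k, p ⟨1, by omega⟩ ω k ∈ Set.Ico (r k) 1)}
        > μ {ω | ∀ k, p ⟨0, by omega⟩ ω k ∈ Set.Ico (q k) 1} *
          μ {ω | ∀ k, p ⟨1, by omega⟩ ω k ∈ Set.Ico (r k) 1} := by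
  by_contra hcon
  push_neg at hcon
  -- measure of an anchored box under the uniform distribution
  have box : ∀ (j : Fin N) (q : Fin d → ℝ), (∀ k, q k ∈ Set.Ico (0:ℝ) 1) →
      μ {ω | ∀ k, p j ω k ∈ Set.Ico (q k) 1} = ∏ k, ENNReal.ofReal (1 - q k) := by
    intro j q hq
    have hS : MeasurableSet (Set.univ.pi fun k => Set.Ico (q k) 1) :=
      MeasurableSet.univ_pi fun k => measurableSet_Ico
    have hset : {ω | ∀ k, p j ω k ∈ Set.Ico (q k) 1}
        = p j ⁻¹' (Set.univ.pi fun k => Set.Ico (q k) 1) := by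
      ext ω; simp [Set.mem_pi]
    rw [hset, ← Measure.map_apply (hmeas j) hS, hunif j, Measure.pi_pi]
    refine Finset.prod_congr rfl fun k _ => ?_
    rw [Measure.restrict_apply measurableSet_Ico,
      Set.inter_eq_left.mpr (Set.Ico_subset_Ico_left (hq k).1), Real.volume_Ico]
  have hbox_meas : ∀ (j : Fin N) (q : Fin d → ℝ),
      MeasurableSet {ω | ∀ k, p j ω k ∈ Set.Ico (q k) 1} := by
    intro j q
    have hset : {ω | ∀ k, p j ω k ∈ Set.Ico (q k) 1}
        = p j ⁻¹' (Set.univ.pi fun k => Set.Ico (q k) 1) := by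
      ext ω; simp [Set.mem_pi]
    rw [hset]
    exact (hmeas j) (MeasurableSet.univ_pi fun k => measurableSet_Ico)
  set P0 : Ω → Fin d → ℝ := p ⟨0, by omega⟩ with hP0def
  set P1 : Ω → Fin d → ℝ := p ⟨1, by omega⟩ with hP1def
  -- a.s. all coordinates of P0 lie in [0,1)
  have hfull : μ {ω | ∀ k, P0 ω k ∈ Set.Ico (0:ℝ) 1} = 1 := by
    rw [hP0def, box ⟨0, by omega⟩ (fun _ => 0) (fun k => by norm_num)]
    simp
  have hnull0 : μ {ω | ∀ k, P0 ω k ∈ Set.Ico (0:ℝ) 1}ᶜ = 0 := by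
    rw [measure_compl (hbox_meas _ _) (measure_ne_top μ _), hfull]
    simp
  -- the chosen anchors
  set q : Fin d → ℝ := fun k => if k = i then ε / 2 else 0 with hqdef
  set r : Fin d → ℝ := fun k => if k = i then 1 - ε / 2 else 0 with hrdef
  have hq : ∀ k, q k ∈ Set.Ico (0:ℝ) 1 := by
    intro k; rw [hqdef]; dsimp only
    split <;> constructor <;> linarith
  have hr : ∀ k, r k ∈ Set.Ico (0:ℝ) 1 := by
    intro k; rw [hrdef]; dsimp only
    split <;> constructor <;> linarith
  set A : Set Ω := {ω | ∀ k, P0 ω k ∈ Set.Ico (q k) 1} with hAdef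
  set B : Set Ω := {ω | ∀ k, P1 ω k ∈ Set.Ico (r k) 1} with hBdef
  have hA : μ A = ENNReal.ofReal (1 - ε / 2) := by
    rw [hAdef, hP0def, box _ q hq, hqdef]
    rw [Fintype.prod_eq_single i (fun k hk => by simp [hk])]
    simp
  have hB : μ B = ENNReal.ofReal (ε / 2) := by
    rw [hBdef, hP1def, box _ r hr, hrdef]
    rw [Fintype.prod_eq_single i (fun k hk => by simp [hk])]
    norm_num
  -- the complement of A within B is contained in the torus-distance bad set (up to null set)
  have hdiff : μ (B \ A) = 0 := by
    have hsub : B \ A ⊆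
        {ω | torusDist (P0 ω i) (P1 ω i) ≤ ε} ∪ {ω | ∀ k, P0 ω k ∈ Set.Ico (0:ℝ) 1}ᶜ := by
      rintro ω ⟨hωB, hωA⟩
      by_cases h0 : ∀ k, P0 ω k ∈ Set.Ico (0:ℝ) 1
      · left
        -- since ω ∉ A, some coordinate fails; only coordinate i can fail
        have hXi : P0 ω i < ε / 2 := by
          by_contra hXi
          push_neg at hXi
          apply hωA
          intro k
          by_cases hk : k = i
          · subst hk
            exact ⟨by simpa [hqdef] using hXi, (h0 k).2⟩
          · simpa [hqdef, hk] using h0 k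
        have hYi : P1 ω i ∈ Set.Ico (1 - ε / 2) 1 := by simpa [hrdef] using hωB i
        have hX0 : (0:ℝ) ≤ P0 ω i := (h0 i).1
        have habs : |P0 ω i - P1 ω i| = P1 ω i - P0 ω i := by
          rw [abs_sub_comm, abs_of_nonneg]; linarith [hYi.1]
        show torusDist (P0 ω i) (P1 ω i) ≤ ε
        unfold torusDist
        rw [habs]
        refine min_le_right _ _ |>.trans ?_
        linarith [hYi.1]
      · right; exact h0
    refine le_antisymm ?_ zero_le
    calc μ (B \ A) ≤ μ ({ω | torusDist (P0 ω i) (P1 ω i) ≤ ε}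
            ∪ {ω | ∀ k, P0 ω k ∈ Set.Ico (0:ℝ) 1}ᶜ) := measure_mono hsub
      _ ≤ μ {ω | torusDist (P0 ω i) (P1 ω i) ≤ ε}
            + μ {ω | ∀ k, P0 ω k ∈ Set.Ico (0:ℝ) 1}ᶜ := measure_union_le _ _
      _ = 0 := by rw [hnull0, hdist]; simp
  -- negative dependence assumption applied to our boxes
  have hle := hcon q r hq hr
  have hAB : {ω | (∀ k, P0 ω k ∈ Set.Ico (q k) 1) ∧ (∀ k, P1 ω k ∈ Set.Ico (r k) 1)}
      = A ∩ B := rfl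
  rw [hAB] at hle
  have hle2 : μ (A ∩ B) ≤ μ A * μ B := hle
  have hBsplit : μ B = μ (A ∩ B) := by
    have h := measure_inter_add_diff (μ := μ) B (hbox_meas ⟨0, by omega⟩ q)
    rw [hdiff, add_zero] at h
    rw [← h, Set.inter_comm]
  rw [← hBsplit, hA, hB] at hle2
  have hlt : ENNReal.ofReal (1 - ε / 2) * ENNReal.ofReal (ε / 2)
      < ENNReal.ofReal (ε / 2) := by
    rw [← ENNReal.ofReal_mul (by linarith)]
    apply ENNReal.ofReal_lt_ofReal_iff (by linarith) |>.mpr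
    nlinarith
  exact absurd hle2 (not_le.mpr hlt)
end
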